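/- Let X be a chain and let α be an injective partial transformation of X. If α is orientation-preserving, then its inverse function α⁻¹ : Im(α) → Dom(α) is also an orientation-preserving partial transformation of X. In particular, if α is order-preserving, then α⁻¹ is also order-preserving. -/
import Mathlib


variable {X : Type*}

/-- The partial transformation `f` is order-preserving on the subset `A` of its domain. -/
def IsOrdOn [LinearOrder X] (f : X →. X) (A : Set X) : Prop :=
  ∀ ⦃x y u v : X⦄, x ∈ A → y ∈ A → x ≤ y → u ∈ f x → v ∈ f y → u ≤ v

/-- `Y` is an ideal of the partial transformation `f`: a nonempty subset of the domain such
that `f` is order-preserving on `Y` and on `Dom f \ Y`, and every element of `Y` is below every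
element of `Dom f \ Y` while its image is above. -/
def IsIdeal [LinearOrder X] (f : X →. X) (Y : Set X) : Prop :=
  Y.Nonempty ∧ Y ⊆ f.Dom ∧ IsOrdOn f Y ∧ IsOrdOn f (f.Dom \ Y) ∧
    ∀ ⦃a b u v : X⦄, a ∈ Y → b ∈ f.Dom \ Y → u ∈ f a → v ∈ f b → a ≤ b ∧ v ≤ u

/-- `f` is an orientation-preserving partial transformation: it is the empty transformation
or it admits an ideal. -/
def IsOP [LinearOrder X] (f : X →. X) : Prop :=
  f.Dom = ∅ ∨ ∃ Y : Set X, IsIdeal f Y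

/-- If `α` is an injective orientation-preserving partial transformation, then its inverse
function `β` (characterized by `y ∈ β x ↔ x ∈ α y`) is orientation-preserving; in particular,
if `α` is order-preserving then so is its inverse. -/
theorem stmt6 (X : Type*) [LinearOrder X] (α : X →. X)
    (hinj : ∀ ⦃x y u : X⦄, u ∈ α x → u ∈ α y → x = y)
    (hOP : IsOP α)
    (β : X →. X) (hβ : ∀ x y : X, y ∈ β x ↔ x ∈ α y) :
    IsOP β ∧ (IsOrdOn α α.Dom → IsOrdOn β β.Dom) := by
  -- key inversion lemma
  have key : ∀ S : Set X, IsOrdOn α S →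
      ∀ ⦃x y u v : X⦄, u ∈ S → v ∈ S → x ≤ y → x ∈ α u → y ∈ α v → u ≤ v := by
    intro S hS x y u v hu hv hxy hx hy
    by_contra h
    push_neg at h
    have hyx : y ≤ x := hS hv hu h.le hy hx
    have hxy' : x = y := le_antisymm hxy hyx
    subst hxy'
    exact absurd (hinj hx hy) h.ne'
  have hdom : ∀ {u x : X}, x ∈ α u → u ∈ α.Dom := by
    intro u x hx
    exact (PFun.mem_dom _ _).mpr ⟨x, hx⟩
  constructor
  · rcases hOP with hemp | ⟨Y, hYne, hYdom, hYord, hCord, hmix⟩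
    · left
      ext x
      simp only [Set.mem_empty_iff_false, iff_false]
      intro hx
      obtain ⟨y, hy⟩ := (PFun.mem_dom _ _).mp hx
      have : y ∈ α.Dom := hdom ((hβ x y).mp hy)
      rw [hemp] at this
      exact this
    · by_cases hβd : β.Dom = (∅ : Set X)
      · exact Or.inl hβd
      · right
        by_cases hC : (α.Dom \ Y).Nonempty
        · refine ⟨{x | ∃ u ∈ α.Dom \ Y, x ∈ α u}, ?_, ?_, ?_, ?_, ?_⟩
          · obtain ⟨u, hu⟩ := hC
            obtain ⟨x, hx⟩ := (PFun.mem_dom _ _).mp hu.1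
            exact ⟨x, u, hu, hx⟩
          · rintro x ⟨u, _, hx⟩
            exact (PFun.mem_dom _ _).mpr ⟨u, (hβ x u).mpr hx⟩
          · intro x y u v hx hy hxy hu hv
            have hxu : x ∈ α u := (hβ x u).mp hu
            have hyv : y ∈ α v := (hβ y v).mp hv
            obtain ⟨a, ha, hxa⟩ := hx
            obtain ⟨b, hb, hyb⟩ := hy
            have hua : u = a := hinj hxu hxa
            have hvb : v = b := hinj hyv hyb
            exact key _ hCord (hua ▸ ha) (hvb ▸ hb) hxy hxu hyv
          · intro x y u v hx hy hxy hu hv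
            have hxu : x ∈ α u := (hβ x u).mp hu
            have hyv : y ∈ α v := (hβ y v).mp hv
            have huY : u ∈ Y := by
              by_contra huY
              exact hx.2 ⟨u, ⟨hdom hxu, huY⟩, hxu⟩
            have hvY : v ∈ Y := by
              by_contra hvY
              exact hy.2 ⟨v, ⟨hdom hyv, hvY⟩, hyv⟩
            exact key _ hYord huY hvY hxy hxu hyv
          · intro a b u v ha hb hu hv
            have hau : a ∈ α u := (hβ a u).mp hu
            have hbv : b ∈ α v := (hβ b v).mp hv
            obtain ⟨c, hc, hac⟩ := ha
            have huc : u = c := hinj hau hac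
            have huC : u ∈ α.Dom \ Y := huc ▸ hc
            have hvY : v ∈ Y := by
              by_contra hvY
              exact hb.2 ⟨v, ⟨hdom hbv, hvY⟩, hbv⟩
            have := hmix hvY huC hbv hau
            exact ⟨this.2, this.1⟩
        · -- α.Dom \ Y = ∅, so α.Dom ⊆ Y
          have hsub : α.Dom ⊆ Y := by
            intro u hu
            by_contra huY
            exact hC ⟨u, hu, huY⟩
          refine ⟨β.Dom, Set.nonempty_iff_ne_empty.mpr hβd, le_refl _, ?_, ?_, ?_⟩
          · intro x y u v _ _ hxy hu hv
            have hxu : x ∈ α u := (hβ x u).mp hu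
            have hyv : y ∈ α v := (hβ y v).mp hv
            exact key _ hYord (hsub (hdom hxu)) (hsub (hdom hyv)) hxy hxu hyv
          · intro x y u v hx _ _ _ _
            exact absurd hx.1 hx.2
          · intro a b u v _ hb _ _
            exact absurd hb.1 hb.2
  · intro h x y u v _ _ hxy hu hv
    have hxu : x ∈ α u := (hβ x u).mp hu
    have hyv : y ∈ α v := (hβ y v).mp hv
    exact key _ h (hdom hxu) (hdom hyv) hxy hxu hyv
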